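/- (Logarithmic Grönwall estimate, zero constant case.) Let T > 0 and K ≥ 0. Let u : [0, T] → [0, e^{−2}] be continuous and satisfy u(t) ≤ K·∫₀^t (−u(s)·ln u(s)) ds for every t ∈ [0, T]. Then u(t) = 0 for every t ∈ [0, T]. -/

import Mathlib

/-!
For `L > K` and `C > 0`, `w t = exp (-C e^{-Lt})` solves `w' = L · negMulLog w` with
`negMulLog w > 0`, and for `C ≥ e^{LT}` it stays below `e⁻¹` on `[0, T]`, where `negMulLog` is
increasing. So `F t = K ∫₀ᵗ negMulLog (u s) ds`, which starts at `0 < w 0`, can never reach `w`: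
at a touching point `u ≤ F = w` would give `F' = K negMulLog u ≤ K negMulLog w < w'`.
Hence `u t ≤ F t ≤ w t` for all large `C`, while `w t → 0` as `C → ∞`.
-/

open Real Set Filter Topology intervalIntegral

theorem Real.monotoneOn_negMulLog : MonotoneOn negMulLog (Icc 0 (exp (-1))) := by
  refine monotoneOn_of_deriv_nonneg (convex_Icc _ _) continuous_negMulLog.continuousOn
    (differentiableOn_negMulLog.mono fun x hx => ?_) fun x hx => ?_ <;>
    rw [interior_Icc] at hx
  · exact hx.1.ne'
  · have : log x ≤ -1 := by simpa using log_le_log hx.1 hx.2.le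
    rw [deriv_negMulLog hx.1.ne']
    linarith

theorem ContinuousOn.hasDerivWithinAt_integral_Ici {f : ℝ → ℝ} {a b x : ℝ}
    (hf : ContinuousOn f (Icc a b)) (hx : x ∈ Ico a b) :
    HasDerivWithinAt (fun t => ∫ s in a..t, f s) (f x) (Ici x) x := by
  have : Fact (x ∈ Icc a b) := ⟨Ico_subset_Icc_self hx⟩
  refine (integral_hasDerivWithinAt_right
    ((hf.mono (Icc_subset_Icc_right hx.2.le)).intervalIntegrable_of_Icc hx.1)
    (hf.stronglyMeasurableAtFilter_nhdsWithin measurableSet_Icc x)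
    (hf x this.out)).mono_of_mem_nhdsWithin (Icc_mem_nhdsGE_of_mem hx)

noncomputable def logGronwallBarrier (L C t : ℝ) : ℝ := exp (-(C * exp (-(L * t))))

namespace logGronwallBarrier

variable {L C : ℝ}

theorem negMulLog_eq (t : ℝ) :
    negMulLog (logGronwallBarrier L C t) = C * exp (-(L * t)) * logGronwallBarrier L C t := by
  simp only [logGronwallBarrier, negMulLog, log_exp]
  ring

theorem hasDerivAt (t : ℝ) :
    HasDerivAt (logGronwallBarrier L C) (L * negMulLog (logGronwallBarrier L C t)) t := by
  refine (((((hasDerivAt_id' t).const_mul L).neg.exp).const_mul C).neg.exp).congr_deriv ?_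
  rw [negMulLog_eq, logGronwallBarrier]
  simp only [Pi.neg_apply]
  ring

theorem le_exp_neg_one {t : ℝ} (ht : 1 ≤ C * exp (-(L * t))) :
    logGronwallBarrier L C t ≤ exp (-1) :=
  exp_le_exp.2 (neg_le_neg ht)

theorem tendsto_atTop (L t : ℝ) :
    Tendsto (fun C => logGronwallBarrier L C t) atTop (𝓝 0) :=
  tendsto_exp_atBot.comp <| tendsto_neg_atTop_atBot.comp <|
    tendsto_id.atTop_mul_const (exp_pos _)

end logGronwallBarrier

theorem mul_integral_negMulLog_le_logGronwallBarrier {T K L C : ℝ} {u : ℝ → ℝ}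
    (hT : 0 ≤ T) (hK : 0 ≤ K) (hKL : K < L) (hC : exp (L * T) ≤ C)
    (hu_cont : ContinuousOn u (Icc 0 T)) (hu_nonneg : ∀ t ∈ Icc 0 T, 0 ≤ u t)
    (hu : ∀ t ∈ Icc 0 T, u t ≤ K * ∫ s in 0..t, negMulLog (u s)) :
    ∀ t ∈ Icc 0 T, K * ∫ s in 0..t, negMulLog (u s) ≤ logGronwallBarrier L C t := by
  have hφu : ContinuousOn (fun s => negMulLog (u s)) (Icc 0 T) :=
    continuous_negMulLog.comp_continuousOn hu_cont
  have hF : ContinuousOn (fun t => ∫ s in 0..t, negMulLog (u s)) (Icc 0 T) := by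
    rw [← uIcc_of_le hT] at hφu ⊢
    exact continuousOn_primitive_interval hφu.integrableOn_uIcc
  have h_large : ∀ t ≤ T, 1 ≤ C * exp (-(L * t)) := fun t ht =>
    calc 1 ≤ exp (L * T) * exp (-(L * t)) := by
            rw [← exp_add, one_le_exp_iff]; nlinarith
      _ ≤ C * exp (-(L * t)) := by gcongr
  refine image_le_of_deriv_right_lt_deriv_boundary (hF.const_smul K)
    (fun x hx => (hφu.hasDerivWithinAt_integral_Ici hx).const_mul K)
    (by simp [logGronwallBarrier, (exp_pos _).le]) logGronwallBarrier.hasDerivAt ?_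
  intro x hx h_touch
  have hux : u x ≤ logGronwallBarrier L C x := (hu x (Ico_subset_Icc_self hx)).trans h_touch.le
  have hw := logGronwallBarrier.le_exp_neg_one (h_large x hx.2.le)
  have hφw : 0 < negMulLog (logGronwallBarrier L C x) := by
    rw [logGronwallBarrier.negMulLog_eq]
    exact mul_pos (mul_pos ((exp_pos _).trans_le hC) (exp_pos _)) (exp_pos _)
  calc K * negMulLog (u x) ≤ K * negMulLog (logGronwallBarrier L C x) := by
        gcongr
        exact monotoneOn_negMulLog ⟨hu_nonneg x (Ico_subset_Icc_self hx), hux.trans hw⟩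
          ⟨(exp_pos _).le, hw⟩ hux
    _ < L * negMulLog (logGronwallBarrier L C x) := by gcongr

theorem eq_zero_of_le_mul_integral_negMulLog {T K : ℝ} {u : ℝ → ℝ} (hK : 0 ≤ K)
    (hu_cont : ContinuousOn u (Icc 0 T)) (hu_nonneg : ∀ t ∈ Icc 0 T, 0 ≤ u t)
    (hu : ∀ t ∈ Icc 0 T, u t ≤ K * ∫ s in 0..t, negMulLog (u s)) :
    ∀ t ∈ Icc 0 T, u t = 0 := by
  intro t ht
  have h_barrier : ∀ᶠ C in atTop, u t ≤ logGronwallBarrier (K + 1) C t := by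
    filter_upwards [eventually_ge_atTop (exp ((K + 1) * T))] with C hC
    exact (hu t ht).trans <| mul_integral_negMulLog_le_logGronwallBarrier (ht.1.trans ht.2) hK
      (lt_add_one K) hC hu_cont hu_nonneg hu t ht
  exact le_antisymm (ge_of_tendsto (logGronwallBarrier.tendsto_atTop _ t) h_barrier)
    (hu_nonneg t ht)

theorem log_gronwall_zero_general
    (T K : ℝ) (hK : 0 ≤ K)
    (u : ℝ → ℝ) (hu_cont : ContinuousOn u (Set.Icc 0 T))
    (hu_mem : ∀ t ∈ Set.Icc (0 : ℝ) T, u t ∈ Set.Icc (0 : ℝ) (Real.exp (-2)))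
    (h_ineq : ∀ t ∈ Set.Icc (0 : ℝ) T,
        u t ≤ K * ∫ s in (0 : ℝ)..t, -(u s * Real.log (u s))) :
    ∀ t ∈ Set.Icc (0 : ℝ) T, u t = 0 :=
  eq_zero_of_le_mul_integral_negMulLog hK hu_cont (fun t ht => (hu_mem t ht).1)
    (by simpa only [negMulLog, neg_mul] using h_ineq)

/-- Logarithmic Grönwall estimate, zero constant case: if `u : [0,T] → [0, e⁻²]`
is continuous with `u(t) ≤ K ∫₀ᵗ (-u(s) ln u(s)) ds`, then `u ≡ 0`. -/
theorem log_gronwall_zero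
    (T K : ℝ) (hT : 0 < T) (hK : 0 ≤ K)
    (u : ℝ → ℝ) (hu_cont : ContinuousOn u (Set.Icc 0 T))
    (hu_mem : ∀ t ∈ Set.Icc (0 : ℝ) T, u t ∈ Set.Icc (0 : ℝ) (Real.exp (-2)))
    (h_ineq : ∀ t ∈ Set.Icc (0 : ℝ) T,
        u t ≤ K * ∫ s in (0 : ℝ)..t, -(u s * Real.log (u s))) :
    ∀ t ∈ Set.Icc (0 : ℝ) T, u t = 0 :=
  log_gronwall_zero_general T K hK u hu_cont hu_mem h_ineq
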